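/- Let α be a pseudo-arc parametrized Cartan null curve in ℝ⁴₁ with frame {ξ, N, W₁, W₂} and curvatures σ₁, σ₂, and let V = cξ + a₁N + a₂W₁ + a₃W₂ be a vector field along α with c a nonzero constant and V parallel (V' = 0). Then: a₂σ₁ + a₃σ₂ = 0, a₁' = a₂, a₂' + a₁σ₁ + c = 0, and a₃' + a₁σ₂ = 0. -/

import Mathlib

noncomputable section

def g (a b : Fin 4 → ℝ) : ℝ := -(a 0 * b 0) + a 1 * b 1 + a 2 * b 2 + a 3 * b 3

def D (c : ℝ → Fin 4 → ℝ) (t : ℝ) : Fin 4 → ℝ := fun i => deriv (fun s => c s i) t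

/-- Theorem 4 (slant-helix system): if V = cξ + a₁N + a₂W₁ + a₃W₂ is parallel with
c ≠ 0 constant, then a₂σ₁ + a₃σ₂ = 0, a₁' = a₂, a₂' + a₁σ₁ + c = 0, a₃' + a₁σ₂ = 0. -/
theorem slant_helix_system
    (ξ N W₁ W₂ : ℝ → Fin 4 → ℝ) (σ₁ σ₂ a₁ a₂ a₃ : ℝ → ℝ) (c : ℝ)
    (hξ : ∀ i, ContDiff ℝ (⊤ : ℕ∞) fun t => ξ t i) (hN : ∀ i, ContDiff ℝ (⊤ : ℕ∞) fun t => N t i)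
    (hW₁ : ∀ i, ContDiff ℝ (⊤ : ℕ∞) fun t => W₁ t i) (hW₂ : ∀ i, ContDiff ℝ (⊤ : ℕ∞) fun t => W₂ t i)
    (hσ₁ : ContDiff ℝ (⊤ : ℕ∞) σ₁) (hσ₂ : ContDiff ℝ (⊤ : ℕ∞) σ₂)
    (ha₁ : ContDiff ℝ (⊤ : ℕ∞) a₁) (ha₂ : ContDiff ℝ (⊤ : ℕ∞) a₂) (ha₃ : ContDiff ℝ (⊤ : ℕ∞) a₃)
    -- frame metric relations
    (h1 : ∀ t, g (ξ t) (ξ t) = 0) (h2 : ∀ t, g (N t) (N t) = 0)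
    (h3 : ∀ t, g (ξ t) (N t) = 1)
    (h4 : ∀ t, g (ξ t) (W₁ t) = 0) (h5 : ∀ t, g (ξ t) (W₂ t) = 0)
    (h6 : ∀ t, g (N t) (W₁ t) = 0) (h7 : ∀ t, g (N t) (W₂ t) = 0)
    (h8 : ∀ t, g (W₁ t) (W₁ t) = 1) (h9 : ∀ t, g (W₂ t) (W₂ t) = 1)
    (h10 : ∀ t, g (W₁ t) (W₂ t) = 0)
    -- Frenet equations
    (hF1 : ∀ t, D ξ t = W₁ t)
    (hF2 : ∀ t, D N t = σ₁ t • W₁ t + σ₂ t • W₂ t)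
    (hF3 : ∀ t, D W₁ t = -(σ₁ t) • ξ t - N t)
    (hF4 : ∀ t, D W₂ t = -(σ₂ t) • ξ t)
    (hc : c ≠ 0)
    (hV : ∀ t, D (fun s => c • ξ s + a₁ s • N s + a₂ s • W₁ s + a₃ s • W₂ s) t = 0) :
    ∀ t, a₂ t * σ₁ t + a₃ t * σ₂ t = 0 ∧ deriv a₁ t = a₂ t ∧
      deriv a₂ t + a₁ t * σ₁ t + c = 0 ∧ deriv a₃ t + a₁ t * σ₂ t = 0 := by

  intro t
  have dξ : ∀ i, HasDerivAt (fun s => ξ s i) (W₁ t i) t := by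
    intro i
    have h := ((hξ i).differentiable (by simp) t).hasDerivAt
    rwa [show deriv (fun s => ξ s i) t = W₁ t i from congrFun (hF1 t) i] at h
  have dN : ∀ i, HasDerivAt (fun s => N s i) (σ₁ t * W₁ t i + σ₂ t * W₂ t i) t := by
    intro i
    have h := ((hN i).differentiable (by simp) t).hasDerivAt
    have e : deriv (fun s => N s i) t = σ₁ t * W₁ t i + σ₂ t * W₂ t i := by
      have := congrFun (hF2 t) i
      simpa [D, Pi.add_apply, Pi.smul_apply, smul_eq_mul] using this
    rwa [e] at h
  have dW₁ : ∀ i, HasDerivAt (fun s => W₁ s i) (-(σ₁ t) * ξ t i - N t i) t := by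
    intro i
    have h := ((hW₁ i).differentiable (by simp) t).hasDerivAt
    have e : deriv (fun s => W₁ s i) t = -(σ₁ t) * ξ t i - N t i := by
      have := congrFun (hF3 t) i
      simpa [D, Pi.sub_apply, Pi.smul_apply, smul_eq_mul] using this
    rwa [e] at h
  have dW₂ : ∀ i, HasDerivAt (fun s => W₂ s i) (-(σ₂ t) * ξ t i) t := by
    intro i
    have h := ((hW₂ i).differentiable (by simp) t).hasDerivAt
    have e : deriv (fun s => W₂ s i) t = -(σ₂ t) * ξ t i := by
      have := congrFun (hF4 t) i
      simpa [D, Pi.smul_apply, smul_eq_mul] using this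
    rwa [e] at h
  have da₁ := (ha₁.differentiable (by simp) t).hasDerivAt
  have da₂ := (ha₂.differentiable (by simp) t).hasDerivAt
  have da₃ := (ha₃.differentiable (by simp) t).hasDerivAt
  have key : ∀ i, c * W₁ t i
      + (deriv a₁ t * N t i + a₁ t * (σ₁ t * W₁ t i + σ₂ t * W₂ t i))
      + (deriv a₂ t * W₁ t i + a₂ t * (-(σ₁ t) * ξ t i - N t i))
      + (deriv a₃ t * W₂ t i + a₃ t * (-(σ₂ t) * ξ t i)) = 0 := by
    intro i
    have hf : HasDerivAt
        (fun s => c * ξ s i + a₁ s * N s i + a₂ s * W₁ s i + a₃ s * W₂ s i)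
        (c * W₁ t i
          + (deriv a₁ t * N t i + a₁ t * (σ₁ t * W₁ t i + σ₂ t * W₂ t i))
          + (deriv a₂ t * W₁ t i + a₂ t * (-(σ₁ t) * ξ t i - N t i))
          + (deriv a₃ t * W₂ t i + a₃ t * (-(σ₂ t) * ξ t i))) t :=
      ((((dξ i).const_mul c).add (da₁.mul (dN i))).add (da₂.mul (dW₁ i))).add
        (da₃.mul (dW₂ i))
    have h0 := congrFun (hV t) i
    simp only [D, Pi.add_apply, Pi.smul_apply, smul_eq_mul, Pi.zero_apply] at h0
    rw [hf.deriv] at h0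
    exact h0
  have e0 := key 0
  have e1 := key 1
  have e2 := key 2
  have e3 := key 3
  have p1 := h1 t; have p2 := h2 t; have p3 := h3 t; have p4 := h4 t
  have p5 := h5 t; have p6 := h6 t; have p7 := h7 t; have p8 := h8 t
  have p9 := h9 t; have p10 := h10 t
  simp only [g] at p1 p2 p3 p4 p5 p6 p7 p8 p9 p10
  refine ⟨?_, ?_, ?_, ?_⟩
  · linear_combination (N t 0) * e0 - (N t 1) * e1 - (N t 2) * e2 - (N t 3) * e3
      + (-(a₂ t * σ₁ t + a₃ t * σ₂ t)) * p3 + (deriv a₁ t - a₂ t) * p2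
      + (c + a₁ t * σ₁ t + deriv a₂ t) * p6 + (a₁ t * σ₂ t + deriv a₃ t) * p7
  · linear_combination (-(ξ t 0)) * e0 + (ξ t 1) * e1 + (ξ t 2) * e2 + (ξ t 3) * e3
      - (-(a₂ t * σ₁ t + a₃ t * σ₂ t)) * p1 - (deriv a₁ t - a₂ t) * p3
      - (c + a₁ t * σ₁ t + deriv a₂ t) * p4 - (a₁ t * σ₂ t + deriv a₃ t) * p5
  · linear_combination (-(W₁ t 0)) * e0 + (W₁ t 1) * e1 + (W₁ t 2) * e2 + (W₁ t 3) * e3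
      - (-(a₂ t * σ₁ t + a₃ t * σ₂ t)) * p4 - (deriv a₁ t - a₂ t) * p6
      - (c + a₁ t * σ₁ t + deriv a₂ t) * p8 - (a₁ t * σ₂ t + deriv a₃ t) * p10
  · linear_combination (-(W₂ t 0)) * e0 + (W₂ t 1) * e1 + (W₂ t 2) * e2 + (W₂ t 3) * e3
      - (-(a₂ t * σ₁ t + a₃ t * σ₂ t)) * p5 - (deriv a₁ t - a₂ t) * p7
      - (c + a₁ t * σ₁ t + deriv a₂ t) * p10 - (a₁ t * σ₂ t + deriv a₃ t) * p9
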